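/- If two finite simple graphs G and H are homomorphically equivalent (there exist homomorphisms G → H and H → G), then α°(G) = α°(H). -/

import Mathlib

/-!
Pull an optimal ordering `g` of `H` back along a homomorphism `φ : G →g H`: order `V` by
`g ∘ φ`, breaking ties arbitrarily. Adjacent vertices have distinct images, so along an
edge this order agrees strictly with `g`, and `φ` maps every monotonic cycle of `G` to a
monotonic cycle of `H` of the same length. Hence `α°(G) ≤ α°(H)`, and symmetrically.
-/

open SimpleGraph

/-- A monotonic cycle with respect to an ordering relation `lt`:
a nonempty list of distinct vertices, strictly increasing w.r.t. `lt`,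
and if it has length at least 2, consecutive vertices are adjacent and
the last vertex is adjacent to the first. -/
def MonoCycle {V : Type*} (G : SimpleGraph V) (lt : V → V → Prop) (l : List V) : Prop :=
  l ≠ [] ∧ l.Nodup ∧ l.Chain' lt ∧
    (2 ≤ l.length → l.Chain' G.Adj ∧
      ∀ a b, l.head? = some a → l.getLast? = some b → G.Adj b a)

/-- The maximum length of a monotonic cycle for the ordering relation `lt`. -/
noncomputable def maxCycleLen {V : Type*} (G : SimpleGraph V) (lt : V → V → Prop) : ℕ :=
  sSup {m | ∃ l : List V, MonoCycle G lt l ∧ l.length = m}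

/-- The circular altitude of a graph: the minimum over all linear orderings
(injections of the vertex set into `ℕ`) of the maximum length of a monotonic cycle. -/
noncomputable def circAlt {V : Type*} (G : SimpleGraph V) : ℕ :=
  sInf {n | ∃ f : V → ℕ, Function.Injective f ∧
    maxCycleLen G (fun a b => f a < f b) = n}

section

variable {V W : Type*} {G : SimpleGraph V} {H : SimpleGraph W}

theorem MonoCycle.map {α β : Type*} [Preorder α] [Preorder β] {f : V → α} {g : W → β}
    (φ : G →g H) (hφ : ∀ a b, f a < f b → G.Adj a b → g (φ a) < g (φ b)) {l : List V}
    (hl : MonoCycle G (fun a b => f a < f b) l) :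
    MonoCycle H (fun a b => g a < g b) (l.map φ) := by
  obtain ⟨hne, -, hlt, hcyc⟩ := hl
  have hchain : (l.map φ).IsChain (fun a b => g a < g b) := by
    rcases le_or_gt 2 l.length with h2 | h2
    · have hlt' := List.isChain_iff_getElem.1 hlt
      have hadj := List.isChain_iff_getElem.1 (hcyc h2).1
      rw [List.isChain_map, List.isChain_iff_getElem]
      exact fun i hi => hφ _ _ (hlt' i hi) (hadj i hi)
    · match l, h2 with
      | [], _ => exact .nil
      | [_], _ => exact .singleton _
  refine ⟨by simpa using hne, ?_, hchain, fun h2 => ?_⟩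
  · have hsorted := List.isChain_iff_pairwise.1 ((List.isChain_map g).2 hchain)
    exact List.Nodup.of_map g (hsorted.imp ne_of_lt)
  · obtain ⟨hadj, hlast⟩ := hcyc (by simpa using h2)
    refine ⟨(List.isChain_map φ).2 (hadj.imp fun _ _ => φ.map_adj), fun a b ha hb => ?_⟩
    rw [List.head?_map, Option.map_eq_some_iff] at ha
    rw [List.getLast?_map, Option.map_eq_some_iff] at hb
    obtain ⟨a, ha, rfl⟩ := ha
    obtain ⟨b, hb, rfl⟩ := hb
    exact φ.map_adj (hlast a b ha hb)

theorem bddAbove_monoCycle_lengths [Finite V] (G : SimpleGraph V) (lt : V → V → Prop) :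
    BddAbove {m | ∃ l : List V, MonoCycle G lt l ∧ l.length = m} :=
  ⟨Nat.card V, by rintro _ ⟨l, hl, rfl⟩; exact hl.2.1.length_le_natCard⟩

theorem maxCycleLen_le_of_hom [Finite W] {α β : Type*} [Preorder α] [Preorder β]
    {f : V → α} {g : W → β} (φ : G →g H)
    (hφ : ∀ a b, f a < f b → G.Adj a b → g (φ a) < g (φ b)) :
    maxCycleLen G (fun a b => f a < f b) ≤ maxCycleLen H (fun a b => g a < g b) := by
  refine csSup_le' ?_
  rintro _ ⟨l, hl, rfl⟩
  rw [← List.length_map φ]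
  exact le_csSup (bddAbove_monoCycle_lengths H _) ⟨_, hl.map φ hφ, rfl⟩

theorem exists_injective_lt_imp_le [Finite V] (h : V → ℕ) :
    ∃ f : V → ℕ, Function.Injective f ∧ ∀ a b, f a < f b → h a ≤ h b := by
  obtain ⟨n, ⟨e⟩⟩ := Finite.exists_equiv_fin V
  set f : V → ℕ := fun v => h v * n + e v
  have hmono : ∀ a b, h a < h b → f a < f b := fun a b hab => by
    have hea := (e a).isLt
    have hstep : (h a + 1) * n ≤ h b * n := Nat.mul_le_mul_right n hab
    simp only [f]
    nlinarith
  refine ⟨f, fun a b hab => ?_, fun a b hab => not_lt.1 fun hba => (hmono b a hba).asymm hab⟩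
  rcases lt_trichotomy (h a) (h b) with hlt | heq | hgt
  · exact absurd hab (hmono a b hlt).ne
  · exact e.injective (Fin.ext (by simpa [f, heq] using hab))
  · exact absurd hab (hmono b a hgt).ne'

theorem exists_maxCycleLen_eq_circAlt [Countable V] (G : SimpleGraph V) :
    ∃ f : V → ℕ, Function.Injective f ∧ maxCycleLen G (fun a b => f a < f b) = circAlt G :=
  have ⟨f, hf⟩ := exists_injective_nat V
  Nat.sInf_mem (s := {n | ∃ f : V → ℕ, Function.Injective f ∧
    maxCycleLen G (fun a b => f a < f b) = n}) ⟨_, f, hf, rfl⟩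

theorem circAlt_le_of_hom [Finite V] [Finite W] (φ : G →g H) : circAlt G ≤ circAlt H := by
  obtain ⟨g, hg, hgH⟩ := exists_maxCycleLen_eq_circAlt H
  obtain ⟨f, hf, hfg⟩ := exists_injective_lt_imp_le (g ∘ φ)
  calc circAlt G ≤ maxCycleLen G (fun a b => f a < f b) := Nat.sInf_le ⟨f, hf, rfl⟩
    _ ≤ maxCycleLen H (fun a b => g a < g b) :=
      maxCycleLen_le_of_hom φ fun a b hab hadj =>
        (hfg a b hab).lt_of_ne fun heq => (φ.map_adj hadj).ne (hg heq)
    _ = circAlt H := hgH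

end

/-- Homomorphically equivalent graphs have the same circular altitude. -/
theorem circAlt_eq_of_homEquiv {V W : Type*} [Finite V] [Finite W]
    (G : SimpleGraph V) (H : SimpleGraph W)
    (h₁ : Nonempty (G →g H)) (h₂ : Nonempty (H →g G)) :
    circAlt G = circAlt H :=
  le_antisymm (circAlt_le_of_hom h₁.some) (circAlt_le_of_hom h₂.some)
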